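/- One-step recursion for the sl_2 generating function: with notation as above and the x_i solving x_{i+1}x_{i-1} = x_i^2 - 1, one has Z^{(k)}_{ℓ,(n_1,…,n_k)}(x_0,x_1) = (x_1^{n_1+2}/(x_0 x_2)) · Z^{(k-1)}_{ℓ,(n_2,…,n_k)}(x_1,x_2). -/

import Mathlib

open Finset

/-- Generalized binomial coefficient `C(m+q, m) = (q+1)(q+2)⋯(q+m)/m!`, defined for any
integer `q` (possibly negative) and `m ∈ ℕ`. -/
noncomputable def genBinom (q : ℤ) (m : ℕ) : ℝ :=
  (∏ j ∈ Finset.range m, ((q : ℝ) + (j : ℝ) + 1)) / (m.factorial : ℝ)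

/-- `q_i(m) = ℓ + ∑_{j=i+1}^k (j-i)(2 m_j - n_j)`, where the `j`-th variable (j = 1,…,k)
is indexed by `Fin k` via `j = (j' : Fin k) + 1`. -/
def qvac (k ℓ : ℕ) (n : ℕ → ℕ) (m : Fin k → ℕ) (i : ℕ) : ℤ :=
  (ℓ : ℤ) + ∑ j : Fin k,
    (if i ≤ (j : ℕ) then (((j : ℕ) : ℤ) + 1 - (i : ℤ)) * (2 * (m j : ℤ) - (n ((j : ℕ) + 1) : ℤ))
     else 0)

/-- The summand of the sl₂ generating function `Z^{(k)}_{ℓ,n}(x₀,x₁)`. -/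
noncomputable def Zsummand (x0 x1 : ℝ) (k ℓ : ℕ) (n : ℕ → ℕ) (m : Fin k → ℕ) : ℝ :=
  x1 ^ (-(qvac k ℓ n m 0)) * x0 ^ (qvac k ℓ n m 1) *
    ∏ j : Fin k, genBinom (qvac k ℓ n m ((j : ℕ) + 1)) (m j)

/-- The sl₂ generating function `Z^{(k)}_{ℓ,n}(x₀,x₁)
  = ∑_{m ∈ ℤ_{≥0}^k} x₁^{-q₀(m)} x₀^{q₁(m)} ∏_{i=1}^k C(m_i + q_i(m), m_i)`. -/
noncomputable def Zfun (x0 x1 : ℝ) (k ℓ : ℕ) (n : ℕ → ℕ) : ℝ :=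
  ∑' m : Fin k → ℕ, Zsummand x0 x1 k ℓ n m

/-! Split off the first summation variable `m₁`. With `t = x₁⁻²` the Q-system relation gives
`1 - t = x₀x₂/x₁²`, and for a fixed tail `m'` the summand becomes
`x₁^{n₁} (1 - t)^{q₁} Z'(m') · C(m₁ + q₁, m₁) t^{m₁}`, where `Z'` is the summand of the
shorter generating function in `(x₁, x₂)` and `q₁` is its `q₀`. The binomial series
`∑ C(m + q, m) tᵐ = (1 - t)^{-(q+1)}` sums each fibre to `x₁^{n₁+2}/(x₀x₂) · Z'(m')`, and
summing over the tails gives the recursion. The series converges only if `|t| < 1`: on a fibre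
where all `q_i ≥ 0` the coefficients `C(m₁ + q₁, m₁)` are at least `1`, so summability of `Z`
forces summability of the geometric series in `t`. -/

theorem genBinom_natCast (a m : ℕ) : genBinom a m = ((m + a).choose a : ℝ) := by
  have hprod : ∏ j ∈ range m, ((a : ℝ) + j + 1) = ((a + 1).ascFactorial m : ℝ) := by
    rw [Nat.ascFactorial_eq_prod_range]; push_cast; ring_nf
  rw [genBinom, Int.cast_natCast, hprod, Nat.ascFactorial_eq_factorial_mul_choose,
    add_comm a m, ← Nat.choose_symm_add]
  push_cast
  field_simp

theorem genBinom_negSucc (r m : ℕ) : genBinom (Int.negSucc r) m = (-1) ^ m * (r.choose m : ℝ) := by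
  have hprod : ∏ j ∈ range m, ((Int.negSucc r : ℝ) + j + 1) = (-1) ^ m * (r.descFactorial m : ℝ) :=
    calc ∏ j ∈ range m, ((Int.negSucc r : ℝ) + j + 1) = ∏ j ∈ range m, -((r : ℝ) - j) :=
          prod_congr rfl fun j _ => by push_cast; ring
      _ = _ := by
          rw [prod_neg, card_range, ← descPochhammer_eval_eq_prod_range,
            descPochhammer_eval_eq_descFactorial]
  rw [genBinom, hprod, Nat.descFactorial_eq_factorial_mul_choose]
  push_cast
  field_simp

theorem one_le_genBinom {q : ℤ} (hq : 0 ≤ q) (m : ℕ) : 1 ≤ genBinom q m := by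
  lift q to ℕ using hq
  rw [genBinom_natCast]
  exact_mod_cast Nat.choose_pos (Nat.le_add_left q m)

theorem hasSum_genBinom_mul_pow (q : ℤ) {t : ℝ} (ht : |t| < 1) :
    HasSum (fun m => genBinom q m * t ^ m) ((1 - t) ^ (-(q + 1))) := by
  cases q with
  | ofNat a =>
    have h := hasSum_choose_mul_geometric_of_norm_lt_one a (r := t) (by rwa [Real.norm_eq_abs])
    rw [one_div, ← zpow_natCast, ← zpow_neg, Nat.cast_succ] at h
    simpa only [Int.ofNat_eq_natCast, genBinom_natCast] using h
  | negSucc r =>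
    have hfin : HasSum (fun m => genBinom (Int.negSucc r) m * t ^ m)
        (∑ m ∈ range (r + 1), genBinom (Int.negSucc r) m * t ^ m) :=
      hasSum_sum_of_ne_finset_zero fun m hm => by
        rw [genBinom_negSucc, Nat.choose_eq_zero_of_lt (by simpa using hm)]; simp
    convert hfin using 1
    rw [show -(Int.negSucc r + 1) = r by omega, zpow_natCast, sub_eq_neg_add, add_pow]
    refine sum_congr rfl fun m _ => ?_
    rw [genBinom_negSucc, one_pow, neg_pow]; ring

theorem abs_lt_one_of_summable_genBinom_mul_pow {q : ℤ} (hq : 0 ≤ q) {t : ℝ}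
    (h : Summable fun m => genBinom q m * t ^ m) : |t| < 1 := by
  have hgeom : Summable fun m => |t| ^ m := by
    refine Summable.of_nonneg_of_le (fun m => by positivity) (fun m => ?_) h.abs
    rw [abs_mul, abs_pow, abs_of_nonneg (zero_le_one.trans (one_le_genBinom hq m))]
    exact le_mul_of_one_le_left (by positivity) (one_le_genBinom hq m)
  simpa using summable_geometric_iff_norm_lt_one.1 hgeom

theorem qvac_zero (k ℓ : ℕ) (n : ℕ → ℕ) (m : Fin k → ℕ) :
    qvac k ℓ n m 0 = qvac k ℓ n m 1 + ∑ j : Fin k, (2 * (m j : ℤ) - n (j + 1)) := by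
  rw [qvac, qvac, add_assoc, ← sum_add_distrib]
  congr 1
  refine sum_congr rfl fun j _ => ?_
  rw [if_pos j.val.zero_le]
  split_ifs with hj
  · push_cast; ring
  · simp [show (j : ℕ) = 0 by omega]

theorem qvac_cons_succ (k ℓ : ℕ) (n : ℕ → ℕ) (a : ℕ) (m : Fin k → ℕ) (i : ℕ) :
    qvac (k + 1) ℓ n (Fin.cons a m) (i + 1) = qvac k ℓ (fun j => n (j + 1)) m i := by
  rw [qvac, qvac, Fin.sum_univ_succ, if_neg (by simp), zero_add]
  congr 1
  refine sum_congr rfl fun j _ => ?_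
  simp only [Fin.cons_succ, Fin.val_succ, add_le_add_iff_right]
  split_ifs
  · push_cast; ring
  · rfl

theorem qvac_cons_zero (k ℓ : ℕ) (n : ℕ → ℕ) (a : ℕ) (m : Fin k → ℕ) :
    qvac (k + 1) ℓ n (Fin.cons a m) 0 = 2 * (a : ℤ) - n 1
      + 2 * qvac k ℓ (fun j => n (j + 1)) m 0 - qvac k ℓ (fun j => n (j + 1)) m 1 := by
  rw [qvac_zero, qvac_cons_succ, Fin.sum_univ_succ, qvac_zero k]
  simp only [Fin.cons_zero, Fin.cons_succ, Fin.val_zero, Fin.val_succ]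
  ring

theorem qvac_nonneg {k ℓ : ℕ} {n : ℕ → ℕ} {m : Fin k → ℕ} (h : ∀ j : Fin k, n (j + 1) ≤ 2 * m j)
    (i : ℕ) : 0 ≤ qvac k ℓ n m i := by
  refine add_nonneg (Int.natCast_nonneg ℓ) (sum_nonneg fun j _ => ?_)
  split_ifs with hij
  · have := h j
    exact mul_nonneg (by omega) (by omega)
  · exact le_rfl

theorem Zsummand_cons {x0 x1 x2 : ℝ} (hx1 : x1 ≠ 0) (hx2 : x2 ≠ 0) (k ℓ : ℕ) (n : ℕ → ℕ)
    (a : ℕ) (m : Fin k → ℕ) :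
    Zsummand x0 x1 (k + 1) ℓ n (Fin.cons a m) =
      x1 ^ n 1 * (x0 * x2 / x1 ^ 2) ^ qvac k ℓ (fun j => n (j + 1)) m 0
        * Zsummand x1 x2 k ℓ (fun j => n (j + 1)) m
        * (genBinom (qvac k ℓ (fun j => n (j + 1)) m 0) a * (x1 ^ 2)⁻¹ ^ a) := by
  rw [Zsummand, Zsummand, qvac_cons_zero, qvac_cons_succ, Fin.prod_univ_succ]
  simp only [Fin.cons_zero, Fin.cons_succ, Fin.val_zero, Fin.val_succ, zero_add, qvac_cons_succ]
  set A := qvac k ℓ (fun j => n (j + 1)) m 0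
  set B := qvac k ℓ (fun j => n (j + 1)) m 1
  rw [show -(2 * (a : ℤ) - n 1 + 2 * A - B) = n 1 + B - 2 * (A + a) by ring, zpow_sub₀ hx1,
    zpow_add₀ hx1, zpow_mul, zpow_add₀ (zpow_ne_zero 2 hx1), zpow_natCast, zpow_natCast,
    div_zpow, mul_zpow, zpow_neg, inv_pow]
  field_simp

theorem Zsummand_ne_zero {x0 x1 : ℝ} (hx0 : x0 ≠ 0) (hx1 : x1 ≠ 0) {k ℓ : ℕ} {n : ℕ → ℕ}
    {m : Fin k → ℕ} (h : ∀ j : Fin k, n (j + 1) ≤ 2 * m j) : Zsummand x0 x1 k ℓ n m ≠ 0 :=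
  mul_ne_zero (mul_ne_zero (zpow_ne_zero _ hx1) (zpow_ne_zero _ hx0)) <|
    prod_ne_zero_iff.2 fun _ _ => (one_pos.trans_le (one_le_genBinom (qvac_nonneg h _) _)).ne'

theorem hasSum_Zsummand_cons {x0 x1 x2 : ℝ} (hx0 : x0 ≠ 0) (hx1 : x1 ≠ 0) (hx2 : x2 ≠ 0)
    (hQ : x1 ^ 2 - 1 = x0 * x2) (h1x1 : 1 < |x1|) (k ℓ : ℕ) (n : ℕ → ℕ) (m : Fin k → ℕ) :
    HasSum (fun a => Zsummand x0 x1 (k + 1) ℓ n (Fin.cons a m))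
      (x1 ^ (n 1 + 2) / (x0 * x2) * Zsummand x1 x2 k ℓ (fun j => n (j + 1)) m) := by
  set A := qvac k ℓ (fun j => n (j + 1)) m 0
  have hx1sq : x1 ^ 2 ≠ 0 := pow_ne_zero 2 hx1
  have ht : |(x1 ^ 2)⁻¹| < 1 := by
    rw [abs_inv, abs_pow]
    exact inv_lt_one_of_one_lt₀ (one_lt_pow₀ h1x1 two_ne_zero)
  have hu : 1 - (x1 ^ 2)⁻¹ = x0 * x2 / x1 ^ 2 := by
    rw [← hQ]; field_simp
  have hu0 : x0 * x2 / x1 ^ 2 ≠ 0 := div_ne_zero (mul_ne_zero hx0 hx2) hx1sq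
  set c := x1 ^ n 1 * (x0 * x2 / x1 ^ 2) ^ A * Zsummand x1 x2 k ℓ (fun j => n (j + 1)) m
  have hvalue : x1 ^ (n 1 + 2) / (x0 * x2) * Zsummand x1 x2 k ℓ (fun j => n (j + 1)) m
      = c * (1 - (x1 ^ 2)⁻¹) ^ (-(A + 1)) := by
    rw [hu, zpow_neg, zpow_add_one₀ hu0]
    field_simp
    ring
  simp_rw [Zsummand_cons hx1 hx2, hvalue]
  exact (hasSum_genBinom_mul_pow A ht).mul_left c

theorem one_lt_abs_of_summable_Zsummand {x0 x1 : ℝ} (hx0 : x0 ≠ 0) (hx1 : x1 ≠ 0) {k ℓ : ℕ}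
    {n : ℕ → ℕ} (hsum : Summable (Zsummand x0 x1 (k + 1) ℓ n)) : 1 < |x1| := by
  -- Any tail with all `q_i ≥ 0` will do, and `Zsummand_cons` holds for any `x₂ ≠ 0`, e.g. `1`.
  set m : Fin k → ℕ := fun j => n (j + 2)
  have hm : ∀ j : Fin k, n (j + 1 + 1) ≤ 2 * m j := fun _ =>
    le_mul_of_one_le_left (Nat.zero_le _) one_le_two
  set A := qvac k ℓ (fun j => n (j + 1)) m 0
  have hc : x1 ^ n 1 * (x0 * 1 / x1 ^ 2) ^ A * Zsummand x1 1 k ℓ (fun j => n (j + 1)) m ≠ 0 :=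
    mul_ne_zero (mul_ne_zero (pow_ne_zero _ hx1) (zpow_ne_zero _ (by simp [hx0, hx1])))
      (Zsummand_ne_zero hx1 one_ne_zero hm)
  have hslice := hsum.comp_injective (Fin.cons_left_injective m)
  simp only [Function.comp_def, Zsummand_cons hx1 one_ne_zero] at hslice
  have ht := abs_lt_one_of_summable_genBinom_mul_pow (qvac_nonneg hm 0)
    ((summable_mul_left_iff hc).1 hslice)
  rw [abs_inv, abs_pow, inv_lt_one₀ (by positivity)] at ht
  exact (one_lt_sq_iff₀ (abs_nonneg x1)).1 ht

theorem HasSum.fin_cons_fiberwise {α M : Type*} [AddCommMonoid M] [TopologicalSpace M]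
    [ContinuousAdd M] [RegularSpace M] {k : ℕ} {f : (Fin (k + 1) → α) → M}
    {g : (Fin k → α) → M} {s : M} (hf : HasSum f s)
    (hg : ∀ m, HasSum (fun a => f (Fin.cons a m)) (g m)) : HasSum g s :=
  ((Equiv.prodComm _ _).trans (Fin.consEquiv fun _ => α)).hasSum_iff.2 hf |>.prod_fiberwise hg

theorem Zfun_recursion_general (x : ℤ → ℝ) (hne : ∀ i, x i ≠ 0)
    (hQ : ∀ i : ℤ, x (i + 1) * x (i - 1) = x i ^ 2 - 1)
    (k : ℕ) (hk : 1 ≤ k) (ℓ : ℕ) (n : ℕ → ℕ)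
    (hsum : Summable (Zsummand (x 0) (x 1) k ℓ n)) :
    Zfun (x 0) (x 1) k ℓ n
      = x 1 ^ (n 1 + 2) / (x 0 * x 2) *
        Zfun (x 1) (x 2) (k - 1) ℓ (fun j => n (j + 1)) := by
  obtain ⟨k, rfl⟩ : ∃ k', k = k' + 1 := ⟨k - 1, by omega⟩
  have hQ1 : x 1 ^ 2 - 1 = x 0 * x 2 := by simpa [mul_comm] using (hQ 1).symm
  have h1x1 : 1 < |x 1| := one_lt_abs_of_summable_Zsummand (hne 0) (hne 1) hsum
  have hfib := hsum.hasSum.fin_cons_fiberwise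
    (hasSum_Zsummand_cons (hne 0) (hne 1) (hne 2) hQ1 h1x1 k ℓ n)
  rw [Nat.add_sub_cancel, Zfun, Zfun, ← tsum_mul_left, hfib.tsum_eq]

/-- One-step recursion for the sl₂ generating function: with `(x_i)` a sequence of nonzero
reals solving the A₁ Q-system `x_{i+1} x_{i-1} = x_i² - 1`,
`Z^{(k)}_{ℓ,(n₁,…,n_k)}(x₀,x₁) = (x₁^{n₁+2}/(x₀ x₂)) · Z^{(k-1)}_{ℓ,(n₂,…,n_k)}(x₁,x₂)`. -/
theorem Zfun_recursion (x : ℤ → ℝ) (hne : ∀ i, x i ≠ 0)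
    (hQ : ∀ i : ℤ, x (i + 1) * x (i - 1) = x i ^ 2 - 1)
    (k : ℕ) (hk : 1 ≤ k) (ℓ : ℕ) (n : ℕ → ℕ)
    (hsum : Summable (Zsummand (x 0) (x 1) k ℓ n))
    (hsum' : Summable (Zsummand (x 1) (x 2) (k - 1) ℓ (fun j => n (j + 1)))) :
    Zfun (x 0) (x 1) k ℓ n
      = x 1 ^ (n 1 + 2) / (x 0 * x 2) *
        Zfun (x 1) (x 2) (k - 1) ℓ (fun j => n (j + 1)) :=
  Zfun_recursion_general x hne hQ k hk ℓ n hsum
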